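/- arXiv:2502.14018 — 4 statements merged into one kernel-verified Lean document; each statement's English description precedes it below -/
import Mathlib

section
/- Let T be an LCA-tree with n leaves. For z ≥ 1, an optimal 1-center for the (1,z)-clustering objective on T restricted to any subtree containing it remains optimal for that subtree: if c minimizes ∑_{ℓ ∈ leaves(T)} d(ℓ,c)^z over leaves c of T, and T' is a subtree of T containing c (rooted at some node of T), then c minimizes ∑_{ℓ ∈ leaves(T')} d(ℓ,c')^z over leaves c' of T'. -/
open Finset
open scoped Classical

/-!
Rooted trees are modeled as finite orders where `a ≤ b` means `b` is a (weak) ancestor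
of `a`; the root is `⊤`, and the lowest common ancestor of `a` and `b` is `a ⊔ b`
(the ancestor sets being chains is the "tree" hypothesis `htree`).
-/

variable {V : Type*}

/-- A leaf is a minimal node of the tree order. -/
def IsLeaf [PartialOrder V] (v : V) : Prop := ∀ w, w ≤ v → w = v

/-- The finset of leaves of the tree. -/
noncomputable def leavesF (V : Type*) [Fintype V] [PartialOrder V] : Finset V :=
  Finset.univ.filter IsLeaf

/-- The leaves of the subtree rooted at `η`. -/
noncomputable def subLeaves [Fintype V] [PartialOrder V] (η : V) : Finset V :=
  (leavesF V).filter (fun ℓ => ℓ ≤ η)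

/-- An optimal 1-center for (1,z)-clustering on an LCA-tree remains optimal for every
subtree containing it. -/
theorem stmt12 [Fintype V] [SemilatticeSup V] [OrderTop V]
    (htree : ∀ v a b : V, v ≤ a → v ≤ b → a ≤ b ∨ b ≤ a)
    (val : V → ℝ) (hval0 : ∀ v, 0 ≤ val v)
    (hmono : ∀ a b : V, a ≤ b → val a ≤ val b)
    (z : ℕ) (hz : 1 ≤ z)
    (c : V) (hc : IsLeaf c)
    (hopt : ∀ c' : V, IsLeaf c' →
      ∑ ℓ ∈ leavesF V, val (ℓ ⊔ c) ^ z ≤ ∑ ℓ ∈ leavesF V, val (ℓ ⊔ c') ^ z)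
    (η : V) (hcη : c ≤ η) :
    ∀ c' ∈ subLeaves η,
      ∑ ℓ ∈ subLeaves η, val (ℓ ⊔ c) ^ z ≤ ∑ ℓ ∈ subLeaves η, val (ℓ ⊔ c') ^ z := by
  intro c' hc'
  rw [subLeaves, mem_filter] at hc'
  obtain ⟨hc'L, hc'η⟩ := hc'
  have hc'leaf : IsLeaf c' := (mem_filter.mp hc'L).2
  have hsub : subLeaves η ⊆ leavesF V := filter_subset _ _
  have hout : ∑ ℓ ∈ leavesF V \ subLeaves η, val (ℓ ⊔ c) ^ z
      = ∑ ℓ ∈ leavesF V \ subLeaves η, val (ℓ ⊔ c') ^ z := by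
    apply Finset.sum_congr rfl
    intro ℓ hℓ
    rw [mem_sdiff] at hℓ
    have hnot : ¬ ℓ ≤ η := fun h => hℓ.2 (mem_filter.mpr ⟨hℓ.1, h⟩)
    have h1 : η ≤ ℓ ⊔ c := by
      rcases htree c (ℓ ⊔ c) η le_sup_right hcη with h | h
      · exact absurd (le_trans le_sup_left h) hnot
      · exact h
    have h2 : η ≤ ℓ ⊔ c' := by
      rcases htree c' (ℓ ⊔ c') η le_sup_right hc'η with h | h
      · exact absurd (le_trans le_sup_left h) hnot
      · exact h
    have heq : ℓ ⊔ c = ℓ ⊔ c' :=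
      le_antisymm (sup_le le_sup_left (hcη.trans h2))
        (sup_le le_sup_left (hc'η.trans h1))
    rw [heq]
  have hglob := hopt c' hc'leaf
  have h1 := Finset.sum_sdiff (f := fun ℓ => val (ℓ ⊔ c) ^ z) hsub
  have h2 := Finset.sum_sdiff (f := fun ℓ => val (ℓ ⊔ c') ^ z) hsub
  linarith
end

section
/- Let T be an LCA-tree, z ≥ 1, and let η be a non-root node with child η_c containing an optimal (1,z)-center of T[η]. Then CostDecrease(η) ≥ CostDecrease(η_c), where CostDecrease(ν) = |leaves(T[ν])|·d(parent(ν))^z − min over leaves c of T[ν] of ∑_{ℓ ∈ leaves(T[ν])} d(ℓ,c)^z. -/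
open Finset
open scoped Classical

/-!
Rooted trees are modeled as finite orders where `a ≤ b` means `b` is a (weak) ancestor
of `a`; the root is `⊤`, and the lowest common ancestor of `a` and `b` is `a ⊔ b`
(the ancestor sets being chains is the "tree" hypothesis `htree`).
-/

variable {V : Type*}

/-- If `ηc` is the child of a non-root node `η` whose subtree contains an optimal
(1,z)-center of `T[η]`, then `CostDecrease(ηc) ≤ CostDecrease(η)`. -/
theorem stmt15 [Fintype V] [SemilatticeSup V] [OrderTop V]
    (htree : ∀ v a b : V, v ≤ a → v ≤ b → a ≤ b ∨ b ≤ a)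
    (val : V → ℝ) (hval0 : ∀ v, 0 ≤ val v)
    (hmono : ∀ a b : V, a ≤ b → val a ≤ val b)
    (parent : V → V) (hpar : ∀ v : V, v ≠ ⊤ → v ⋖ parent v)
    (z : ℕ) (hz : 1 ≤ z)
    (hbe : ∀ η : V, (subLeaves η).Nonempty)
    (η ηc : V) (hηtop : η ≠ ⊤) (hchild : ηc ⋖ η) (hpc : parent ηc = η)
    (cstar : V) (hmem : cstar ∈ subLeaves η) (hin : cstar ≤ ηc)
    (hopt : ∀ c' ∈ subLeaves η,
      ∑ ℓ ∈ subLeaves η, val (ℓ ⊔ cstar) ^ z ≤ ∑ ℓ ∈ subLeaves η, val (ℓ ⊔ c') ^ z) :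
    ((subLeaves ηc).card : ℝ) * val (parent ηc) ^ z -
        (subLeaves ηc).inf' (hbe ηc) (fun c => ∑ ℓ ∈ subLeaves ηc, val (ℓ ⊔ c) ^ z) ≤
      ((subLeaves η).card : ℝ) * val (parent η) ^ z -
        (subLeaves η).inf' (hbe η) (fun c => ∑ ℓ ∈ subLeaves η, val (ℓ ⊔ c) ^ z) := by
  classical
  have hAB : subLeaves ηc ⊆ subLeaves η := by
    intro x hx
    simp only [subLeaves, leavesF, Finset.mem_filter] at hx ⊢
    exact ⟨hx.1, hx.2.trans hchild.le⟩
  have hPη : η ≤ parent η := (hpar η hηtop).le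
  have hvP : val η ^ z ≤ val (parent η) ^ z :=
    pow_le_pow_left₀ (hval0 η) (hmono _ _ hPη) z
  obtain ⟨cA, hcA, hinfA⟩ :=
    Finset.exists_mem_eq_inf' (hbe ηc) (fun c => ∑ ℓ ∈ subLeaves ηc, val (ℓ ⊔ c) ^ z)
  have hcAB : cA ∈ subLeaves η := hAB hcA
  have hcAηc : cA ≤ ηc := by
    simp only [subLeaves, leavesF, Finset.mem_filter] at hcA; exact hcA.2
  have hinfB : ((subLeaves η).inf' (hbe η) fun c => ∑ ℓ ∈ subLeaves η, val (ℓ ⊔ c) ^ z)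
      ≤ ∑ ℓ ∈ subLeaves η, val (ℓ ⊔ cA) ^ z := Finset.inf'_le _ hcAB
  have hsplit : ∑ ℓ ∈ subLeaves η, val (ℓ ⊔ cA) ^ z
      = ∑ ℓ ∈ subLeaves η \ subLeaves ηc, val (ℓ ⊔ cA) ^ z
        + ∑ ℓ ∈ subLeaves ηc, val (ℓ ⊔ cA) ^ z :=
    (Finset.sum_sdiff hAB).symm
  have hbound : ∑ ℓ ∈ subLeaves η \ subLeaves ηc, val (ℓ ⊔ cA) ^ z
      ≤ ((subLeaves η \ subLeaves ηc).card : ℝ) * val (parent η) ^ z := by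
    calc ∑ ℓ ∈ subLeaves η \ subLeaves ηc, val (ℓ ⊔ cA) ^ z
        ≤ ∑ _ℓ ∈ subLeaves η \ subLeaves ηc, val (parent η) ^ z := by
          apply Finset.sum_le_sum
          intro ℓ hℓ
          have hℓB : ℓ ∈ subLeaves η := (Finset.mem_sdiff.mp hℓ).1
          have hℓη : ℓ ≤ η := by
            simp only [subLeaves, leavesF, Finset.mem_filter] at hℓB; exact hℓB.2
          have hle : ℓ ⊔ cA ≤ parent η :=
            le_trans (sup_le hℓη (hcAηc.trans hchild.le)) hPη
          exact pow_le_pow_left₀ (hval0 _) (hmono _ _ hle) z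
      _ = ((subLeaves η \ subLeaves ηc).card : ℝ) * val (parent η) ^ z := by
          rw [Finset.sum_const, nsmul_eq_mul]
  have hcardn : (subLeaves η \ subLeaves ηc).card + (subLeaves ηc).card = (subLeaves η).card :=
    Finset.card_sdiff_add_card_eq_card hAB
  have hcard : ((subLeaves η \ subLeaves ηc).card : ℝ) + (subLeaves ηc).card
      = (subLeaves η).card := by exact_mod_cast hcardn
  have hApz : ((subLeaves ηc).card : ℝ) * val η ^ z
      ≤ ((subLeaves ηc).card : ℝ) * val (parent η) ^ z :=
    mul_le_mul_of_nonneg_left hvP (Nat.cast_nonneg _)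
  have hBP : ((subLeaves η).card : ℝ) * val (parent η) ^ z
      = ((subLeaves η \ subLeaves ηc).card : ℝ) * val (parent η) ^ z
        + ((subLeaves ηc).card : ℝ) * val (parent η) ^ z := by
    rw [← hcard]; ring
  rw [hpc, hinfA]
  linarith
end

section
/- Let T be an LCA-tree and z ≥ 1. Replacing each node's value by its cost-decrease (with the root assigned +∞, or equivalently a value at least as large as all others) yields a valid LCA-tree: cost-decreases are nonnegative and monotonically non-decreasing along every path from a leaf to the root; in particular the induced LCA-distances satisfy the strong triangle inequality. -/
open Finset
open scoped Classical

/-!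
Rooted trees are modeled as finite orders where `a ≤ b` means `b` is a (weak) ancestor
of `a`; the root is `⊤`, and the lowest common ancestor of `a` and `b` is `a ⊔ b`
(the ancestor sets being chains is the "tree" hypothesis `htree`).
-/

variable {V : Type*}

/-- Replacing each non-root node's value by its cost-decrease (the root getting a value
at least as large as all others) again yields a valid LCA-tree: the values are
nonnegative, non-decreasing along leaf-to-root paths, and the induced LCA-distances
satisfy the strong triangle inequality. -/
theorem stmt16 [Fintype V] [SemilatticeSup V] [OrderTop V]
    (htree : ∀ v a b : V, v ≤ a → v ≤ b → a ≤ b ∨ b ≤ a)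
    (val : V → ℝ) (hval0 : ∀ v, 0 ≤ val v)
    (hmono : ∀ a b : V, a ≤ b → val a ≤ val b)
    (parent : V → V) (hpar : ∀ v : V, v ≠ ⊤ → v ⋖ parent v)
    (z : ℕ) (hz : 1 ≤ z)
    (hbe : ∀ η : V, (subLeaves η).Nonempty)
    (D : V → ℝ)
    (hD : ∀ η : V, η ≠ ⊤ →
      D η = ((subLeaves η).card : ℝ) * val (parent η) ^ z -
        (subLeaves η).inf' (hbe η) (fun c => ∑ ℓ ∈ subLeaves η, val (ℓ ⊔ c) ^ z))
    (hroot : ∀ η : V, D η ≤ D ⊤) (hroot0 : 0 ≤ D ⊤) :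
    (∀ v : V, 0 ≤ D v) ∧
    (∀ a b : V, a ≤ b → D a ≤ D b) ∧
    (∀ l1 l2 l3 : V, IsLeaf l1 → IsLeaf l2 → IsLeaf l3 →
      D (l1 ⊔ l3) ≤ max (D (l1 ⊔ l2)) (D (l2 ⊔ l3))) := by
  -- basic facts
  have hle_parent : ∀ v : V, v ≠ ⊤ → v ≤ parent v := fun v h => (hpar v h).lt.le
  have hsub : ∀ {a b : V}, a ≤ b → subLeaves a ⊆ subLeaves b := by
    intro a b hab ℓ hℓ
    simp only [subLeaves, Finset.mem_filter] at hℓ ⊢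
    exact ⟨hℓ.1, hℓ.2.trans hab⟩
  have hmem_le : ∀ {ℓ η : V}, ℓ ∈ subLeaves η → ℓ ≤ η := by
    intro ℓ η hℓ
    simp only [subLeaves, Finset.mem_filter] at hℓ
    exact hℓ.2
  have hpow : ∀ {a b : V}, a ≤ b → val a ^ z ≤ val b ^ z := by
    intro a b hab
    exact pow_le_pow_left₀ (hval0 a) (hmono a b hab) z
  -- nonnegativity
  have hnn : ∀ v : V, 0 ≤ D v := by
    intro v
    by_cases hv : v = ⊤
    · subst hv; exact hroot0
    · rw [hD v hv]
      obtain ⟨c, hc⟩ := hbe v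
      have h1 : (subLeaves v).inf' (hbe v) (fun c => ∑ ℓ ∈ subLeaves v, val (ℓ ⊔ c) ^ z) ≤
          ∑ ℓ ∈ subLeaves v, val (ℓ ⊔ c) ^ z := Finset.inf'_le _ hc
      have h2 : ∑ ℓ ∈ subLeaves v, val (ℓ ⊔ c) ^ z ≤
          ∑ _ℓ ∈ subLeaves v, val (parent v) ^ z := by
        refine Finset.sum_le_sum fun ℓ hℓ => hpow ?_
        exact (sup_le (hmem_le hℓ) (hmem_le hc)).trans (hle_parent v hv)
      rw [Finset.sum_const, nsmul_eq_mul] at h2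
      linarith
  -- key step: D is non-decreasing from a node to its parent
  have hkey : ∀ η : V, η ≠ ⊤ → D η ≤ D (parent η) := by
    intro η hη
    by_cases hπ : parent η = ⊤
    · rw [hπ]; exact hroot η
    · rw [hD η hη, hD (parent η) hπ]
      obtain ⟨c, hc, hceq⟩ := Finset.exists_mem_eq_inf' (hbe η)
        (fun c => ∑ ℓ ∈ subLeaves η, val (ℓ ⊔ c) ^ z)
      have hss : subLeaves η ⊆ subLeaves (parent η) := hsub (hle_parent η hη)
      have hcπ : c ∈ subLeaves (parent η) := hss hc
      have h1 : (subLeaves (parent η)).inf' (hbe (parent η))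
          (fun c => ∑ ℓ ∈ subLeaves (parent η), val (ℓ ⊔ c) ^ z) ≤
          ∑ ℓ ∈ subLeaves (parent η), val (ℓ ⊔ c) ^ z := Finset.inf'_le _ hcπ
      have hsplit : (∑ ℓ ∈ subLeaves (parent η) \ subLeaves η, val (ℓ ⊔ c) ^ z) +
          ∑ ℓ ∈ subLeaves η, val (ℓ ⊔ c) ^ z =
          ∑ ℓ ∈ subLeaves (parent η), val (ℓ ⊔ c) ^ z := Finset.sum_sdiff hss
      have h2 : ∑ ℓ ∈ subLeaves (parent η) \ subLeaves η, val (ℓ ⊔ c) ^ z ≤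
          ∑ _ℓ ∈ subLeaves (parent η) \ subLeaves η, val (parent (parent η)) ^ z := by
        refine Finset.sum_le_sum fun ℓ hℓ => hpow ?_
        have hℓπ : ℓ ≤ parent η := hmem_le (Finset.mem_sdiff.mp hℓ).1
        exact (sup_le hℓπ (hmem_le hcπ)).trans (hle_parent _ hπ)
      rw [Finset.sum_const, nsmul_eq_mul, Finset.card_sdiff_of_subset hss] at h2
      have hcard : (subLeaves η).card ≤ (subLeaves (parent η)).card :=
        Finset.card_le_card hss
      have hcast : ((subLeaves (parent η)).card - (subLeaves η).card : ℕ) =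
          ((subLeaves (parent η)).card : ℝ) - (subLeaves η).card := by
        push_cast [Nat.cast_sub hcard]; ring
      rw [hcast] at h2
      have h3 : ((subLeaves η).card : ℝ) * val (parent η) ^ z ≤
          ((subLeaves η).card : ℝ) * val (parent (parent η)) ^ z := by
        have := hpow (hle_parent (parent η) hπ)
        have hc0 : (0 : ℝ) ≤ (subLeaves η).card := Nat.cast_nonneg _
        nlinarith
      rw [hceq]
      linarith
  -- monotonicity
  have hmonoD : ∀ a b : V, a ≤ b → D a ≤ D b := by
    intro a
    induction a using IsWellFounded.induction (r := ((· > ·) : V → V → Prop)) with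
    | _ a IH =>
      intro b hab
      rcases eq_or_lt_of_le hab with rfl | hlt
      · exact le_refl _
      · have ha : a ≠ ⊤ := fun h => (h ▸ hlt).not_ge le_top
        have hcov := hpar a ha
        have hpa : parent a ≤ b := by
          rcases htree a (parent a) b (hcov.lt.le) hab with h | h
          · exact h
          · rcases lt_or_eq_of_le h with h' | h'
            · exact ((hcov.2 hlt) h').elim
            · exact h'.ge
        exact (hkey a ha).trans (IH (parent a) hcov.lt b hpa)
  refine ⟨hnn, hmonoD, fun l1 l2 l3 _ _ _ => ?_⟩
  rcases htree l2 (l1 ⊔ l2) (l2 ⊔ l3) le_sup_right le_sup_left with h | h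
  · exact le_max_of_le_right (hmonoD _ _ (sup_le (le_sup_left.trans h) le_sup_right))
  · exact le_max_of_le_left (hmonoD _ _ (sup_le le_sup_left (le_sup_right.trans h)))
end

section
/- Greedy selection of centers maximizing the cost-decrease yields an optimal (k,z)-clustering on an LCA-tree: if C_g is a set of k leaf centers obtained by iteratively placing, at each step, the optimal (1,z)-center of the unmarked subtree with maximum cost-decrease, then for every set C of k leaves, Cost_z(T, C_g) ≤ Cost_z(T, C), where Cost_z(T,C) = ∑ over leaves ℓ of min over c ∈ C of d(ℓ,c)^z. -/
open Finset
open scoped Classical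

/-!
Rooted trees are modeled as finite orders where `a ≤ b` means `b` is a (weak) ancestor
of `a`; the root is `⊤`, and the lowest common ancestor of `a` and `b` is `a ⊔ b`
(the ancestor sets being chains is the "tree" hypothesis `htree`).
-/

variable {V : Type*}

/-!
Exchange argument. Let `M` be the centers placed before the greedy center `c`, an optimal
`1`-center of the unmarked subtree `T[η]`, and let `C` be any set of leaf centers. Some `o ∈ C`
can be replaced by `c` without increasing the cost of `M ∪ C`:
* if `C` meets `T[η]`, take such an `o` with `c ⊔ o` lowest. By the ultrametric inequality only
  leaves of `T[η]` change distance, each by at most `d(ℓ, c)^z - d(ℓ, o)^z`, and these sum to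
  at most `0` since `c` is optimal for `T[η]`;
* otherwise take any `o ∈ C` and its highest unmarked ancestor `μ`. Trading `o` for `c` loses at
  most the gain of `o` on `T[μ]` and wins the cost-decrease of `η`, which is larger by the
  greedy choice.
Applying the exchange `k` times, once per greedy center, turns `C` into the greedy set.
-/

section Exchange

variable {α β : Type*} [DecidableEq α] [Preorder β]

theorem le_of_exchange (F : Finset α → β) (P : α → Prop) (L : List α)
    (hex : ∀ (i : ℕ) (hi : i < L.length) (C : Finset α), C.Nonempty → (∀ c ∈ C, P c) →
      ∃ o ∈ C, F (insert L[i] ((L.take i).toFinset ∪ C.erase o)) ≤ F ((L.take i).toFinset ∪ C))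
    (C : Finset α) (hC : ∀ c ∈ C, P c) (hcard : C.card = L.length) :
    F L.toFinset ≤ F C := by
  suffices key : ∀ n i, i + n = L.length → ∀ C : Finset α, (∀ c ∈ C, P c) → C.card = n →
      F L.toFinset ≤ F ((L.take i).toFinset ∪ C) by
    simpa using key _ 0 (zero_add _) C hC hcard
  intro n
  induction n with
  | zero =>
    rintro i rfl C _ hC0
    simp [Finset.card_eq_zero.1 hC0]
  | succ n ih =>
    intro i hin C hC hcard
    have hi : i < L.length := by omega
    obtain ⟨o, hoC, hle⟩ := hex i hi C (Finset.card_pos.1 (by omega)) hC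
    have htake : (L.take (i + 1)).toFinset = insert L[i] (L.take i).toFinset := by
      rw [← List.take_concat_get' _ _ hi, List.toFinset_append, Finset.union_comm]
      simp
    calc F L.toFinset ≤ F ((L.take (i + 1)).toFinset ∪ C.erase o) :=
          ih (i + 1) (by omega) _ (fun c hc => hC c (Finset.mem_of_mem_erase hc))
            (by rw [Finset.card_erase_of_mem hoC, hcard]; rfl)
      _ = F (insert L[i] ((L.take i).toFinset ∪ C.erase o)) := by
          rw [htake, Finset.insert_union]
      _ ≤ F ((L.take i).toFinset ∪ C) := hle

end Exchange

def Marked [LE V] (S : Finset V) (η : V) : Prop := ∃ c ∈ S, c ≤ η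

theorem Marked.mono [Preorder V] {S : Finset V} {a b : V} (h : Marked S a) (hab : a ≤ b) :
    Marked S b :=
  let ⟨c, hc, hca⟩ := h; ⟨c, hc, hca.trans hab⟩

theorem Marked.subset [LE V] {S T : Finset V} {a : V} (h : Marked S a) (hST : S ⊆ T) :
    Marked T a :=
  let ⟨c, hc, hca⟩ := h; ⟨c, hST hc, hca⟩

theorem marked_toFinset [LE V] {L : List V} {η : V} : Marked L.toFinset η ↔ ∃ c ∈ L, c ≤ η := by
  simp [Marked]

theorem mem_subLeaves [Fintype V] [PartialOrder V] {ℓ η : V} :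
    ℓ ∈ subLeaves η ↔ IsLeaf ℓ ∧ ℓ ≤ η := by
  simp [subLeaves, leavesF]

theorem exists_unmarked_ancestor [Finite V] [PartialOrder V] [OrderTop V] {parent : V → V}
    (hpar : ∀ v : V, v ≠ ⊤ → v ⋖ parent v) {M : Finset V} (hM : Marked M ⊤) {o : V}
    (ho : ¬ Marked M o) : ∃ μ, o ≤ μ ∧ μ ≠ ⊤ ∧ ¬ Marked M μ ∧ Marked M (parent μ) := by
  obtain ⟨μ, hoμ, hμM, hmax⟩ := Finite.exists_le_maximal (p := fun a => ¬ Marked M a) ho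
  have hμ : μ ≠ ⊤ := by rintro rfl; exact hμM hM
  refine ⟨μ, hoμ, hμ, hμM, by_contra fun hp => ?_⟩
  exact (hpar μ hμ).lt.not_ge (hmax hp (hpar μ hμ).le)

section TreeOrder

variable [SemilatticeSup V] (htree : ∀ v a b : V, v ≤ a → v ≤ b → a ≤ b ∨ b ≤ a)
include htree

theorem le_sup_of_not_le {ℓ x η : V} (hℓ : ℓ ≤ η) (hx : ¬ x ≤ η) : η ≤ ℓ ⊔ x :=
  (htree ℓ (ℓ ⊔ x) η le_sup_left hℓ).resolve_left fun h => hx (le_sup_right.trans h)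

/-- `ℓ ⊔ o ≤ (ℓ ⊔ c) ⊔ (c ⊔ o)` and the ancestors `ℓ ⊔ c`, `ℓ ⊔ x` of `ℓ` are comparable: the
ultrametric inequality of the LCA distance. -/
theorem sup_le_sup_or_forall {c o : V} {D : Finset V} (hD : ∀ x ∈ D, c ⊔ o ≤ c ⊔ x) (ℓ : V) :
    ℓ ⊔ o ≤ ℓ ⊔ c ∨ ∀ x ∈ D, ℓ ⊔ o ≤ ℓ ⊔ x := by
  by_cases hco : c ⊔ o ≤ ℓ ⊔ c
  · exact Or.inl (sup_le le_sup_left (le_sup_right.trans hco))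
  refine Or.inr fun x hx => ?_
  have hcx : ℓ ⊔ c ≤ ℓ ⊔ x := (htree ℓ _ _ le_sup_left le_sup_left).resolve_right fun h =>
    hco ((hD x hx).trans (sup_le le_sup_right (le_sup_right.trans h)))
  exact sup_le le_sup_left
    (le_sup_right.trans ((hD x hx).trans (sup_le (le_sup_right.trans hcx) le_sup_right)))

theorem exists_forall_sup_le [Finite V] (c : V) {S : Finset V} (hS : S.Nonempty) :
    ∃ o ∈ S, ∀ x ∈ S, c ⊔ o ≤ c ⊔ x := by
  obtain ⟨o, hoS, hmin⟩ := exists_minimalFor_of_wellFoundedLT (· ∈ S) (c ⊔ ·) hS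
  exact ⟨o, hoS, fun x hx => (htree c _ _ le_sup_left le_sup_left).elim id (hmin hx)⟩

variable [OrderTop V] {parent : V → V} (hpar : ∀ v : V, v ≠ ⊤ → v ⋖ parent v)
include hpar

theorem parent_le_of_lt {η a : V} (hη : η ≠ ⊤) (h : η < a) : parent η ≤ a := by
  rcases htree η a (parent η) h.le (hpar η hη).le with ha | ha
  · rcases ha.lt_or_eq with hlt | rfl
    · exact absurd hlt ((hpar η hη).2 h)
    · exact le_rfl
  · exact ha

theorem parent_le_sup_of_not_le {ℓ x η : V} (hη : η ≠ ⊤) (hℓ : ℓ ≤ η) (hx : ¬ x ≤ η) :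
    parent η ≤ ℓ ⊔ x :=
  parent_le_of_lt htree hpar hη <|
    (le_sup_of_not_le htree hℓ hx).lt_of_ne fun h => hx (h ▸ le_sup_right)

end TreeOrder

section CenterDist

variable [SemilatticeSup V] [OrderTop V]

/-- The distance from `ℓ` to the nearest center of `S`; the root `⊤` acts as an extra center,
at distance `val ⊤`, so that the empty set of centers is allowed. -/
noncomputable def centerDist (val : V → ℝ) (S : Finset V) (ℓ : V) : ℝ :=
  (insert ⊤ S).inf' (Finset.insert_nonempty _ _) fun c => val (ℓ ⊔ c)

noncomputable def clusterCost [Fintype V] (val : V → ℝ) (z : ℕ) (S : Finset V) : ℝ :=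
  ∑ ℓ ∈ leavesF V, centerDist val S ℓ ^ z

variable {val : V → ℝ} {S T : Finset V} {x ℓ : V}

theorem centerDist_le (hx : x ∈ S) : centerDist val S ℓ ≤ val (ℓ ⊔ x) :=
  Finset.inf'_le _ (Finset.mem_insert_of_mem hx)

theorem le_centerDist {m : ℝ} (htop : m ≤ val ⊤) (h : ∀ x ∈ S, m ≤ val (ℓ ⊔ x)) :
    m ≤ centerDist val S ℓ := by
  refine Finset.le_inf' _ _ fun c hc => ?_
  rcases Finset.mem_insert.1 hc with rfl | hc
  · simpa using htop
  · exact h c hc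

theorem centerDist_anti (h : S ⊆ T) (ℓ : V) : centerDist val T ℓ ≤ centerDist val S ℓ :=
  Finset.le_inf' _ _ fun _ hc => Finset.inf'_le _ (Finset.insert_subset_insert _ h hc)

theorem centerDist_insert :
    centerDist val (insert x S) ℓ = min (val (ℓ ⊔ x)) (centerDist val S ℓ) := by
  simp only [centerDist, Finset.insert_comm ⊤ x]
  exact Finset.inf'_insert (Finset.insert_nonempty ⊤ S) (fun c => val (ℓ ⊔ c)) (b := x)

theorem centerDist_nonneg (hval0 : ∀ v, 0 ≤ val v) (S : Finset V) (ℓ : V) :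
    0 ≤ centerDist val S ℓ :=
  Finset.le_inf' _ _ fun _ _ => hval0 _

theorem clusterCost_anti [Fintype V] (hval0 : ∀ v, 0 ≤ val v) (z : ℕ) (h : S ⊆ T) :
    clusterCost val z T ≤ clusterCost val z S :=
  Finset.sum_le_sum fun ℓ _ =>
    pow_le_pow_left₀ (centerDist_nonneg hval0 T ℓ) (centerDist_anti h ℓ) z

variable (hmono : Monotone val)
include hmono

theorem centerDist_eq_inf' (hS : S.Nonempty) (ℓ : V) :
    S.inf' hS (fun c => val (ℓ ⊔ c)) = centerDist val S ℓ := by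
  obtain ⟨c, hc⟩ := hS
  exact le_antisymm
    (le_centerDist ((Finset.inf'_le _ hc).trans (hmono le_top)) fun x hx => Finset.inf'_le _ hx)
    (Finset.le_inf' _ _ fun x hx => centerDist_le hx)

theorem centerDist_le_of_marked {a : V} (h : Marked S a) (hℓ : ℓ ≤ a) :
    centerDist val S ℓ ≤ val a :=
  let ⟨_, hc, hca⟩ := h; (centerDist_le hc).trans (hmono (sup_le hℓ hca))

theorem centerDist_le_sup {a : V} (h : Marked S a) (ha : a ≤ ℓ ⊔ x) :
    centerDist val S ℓ ≤ val (ℓ ⊔ x) :=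
  centerDist_le_of_marked hmono (h.mono ha) le_sup_left

theorem centerDist_eq_of_unmarked
    (htree : ∀ v a b : V, v ≤ a → v ≤ b → a ≤ b ∨ b ≤ a) {parent : V → V}
    (hpar : ∀ v : V, v ≠ ⊤ → v ⋖ parent v) {η : V} (hη : η ≠ ⊤) (hηS : ¬ Marked S η)
    (hp : Marked S (parent η)) (hℓ : ℓ ≤ η) : centerDist val S ℓ = val (parent η) :=
  le_antisymm (centerDist_le_of_marked hmono hp (hℓ.trans (hpar η hη).le))
    (le_centerDist (hmono le_top) fun x hx =>
      hmono (parent_le_sup_of_not_le htree hpar hη hℓ fun h => hηS ⟨x, hx, h⟩))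

end CenterDist

theorem pow_min_sub_pow_min_le (z : ℕ) {a b d : ℝ} (hb : 0 ≤ b) (hd : 0 ≤ d)
    (h : b ≤ a ∨ b ≤ d) : min a d ^ z - min b d ^ z ≤ a ^ z - b ^ z := by
  rcases le_total a d with had | hda <;> rcases le_total b d with hbd | hdb
  · rw [min_eq_left had, min_eq_left hbd]
  · have hbd : b ≤ d := h.elim (·.trans had) id
    rw [min_eq_left had, min_eq_right hdb]
    linarith [pow_le_pow_left₀ hb hbd z]
  · rw [min_eq_right hda, min_eq_left hbd]
    linarith [pow_le_pow_left₀ hd hda z]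
  · have hba : b ≤ a := h.elim id (·.trans hda)
    rw [min_eq_right hda, min_eq_right hdb, sub_self, sub_nonneg]
    exact pow_le_pow_left₀ hb hba z

theorem pow_sub_pow_min_le (z : ℕ) {b d p : ℝ} (hb : 0 ≤ b) (hd : 0 ≤ d) (hdp : d ≤ p)
    (hbp : b ≤ p) : d ^ z - min b d ^ z ≤ p ^ z - b ^ z := by
  rcases le_total d b with hdb | hbd
  · rw [min_eq_right hdb, sub_self, sub_nonneg]
    exact pow_le_pow_left₀ hb hbp z
  · rw [min_eq_left hbd]
    linarith [pow_le_pow_left₀ hd hdp z]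

section Greedy

variable [Fintype V] [SemilatticeSup V] (val : V → ℝ) (parent : V → V) (z : ℕ)

/-- The cost decrease on `T[η]` when `o` becomes a center, if all leaves of `T[η]` were at
distance `val (parent η)` from the centers (as when `η` is unmarked and its parent marked). -/
noncomputable def subtreeGain (η o : V) : ℝ :=
  ∑ ℓ ∈ subLeaves η, (val (parent η) ^ z - val (ℓ ⊔ o) ^ z)

noncomputable def costDecrease (η : V) (hη : (subLeaves η).Nonempty) : ℝ :=
  ((subLeaves η).card : ℝ) * val (parent η) ^ z -
    (subLeaves η).inf' hη (fun c => ∑ ℓ ∈ subLeaves η, val (ℓ ⊔ c) ^ z)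

variable {val parent z}

theorem subtreeGain_eq (η o : V) : subtreeGain val parent z η o =
    ((subLeaves η).card : ℝ) * val (parent η) ^ z - ∑ ℓ ∈ subLeaves η, val (ℓ ⊔ o) ^ z := by
  simp [subtreeGain, Finset.sum_sub_distrib]

theorem subtreeGain_le_costDecrease {η o : V} (ho : o ∈ subLeaves η)
    (hη : (subLeaves η).Nonempty) :
    subtreeGain val parent z η o ≤ costDecrease val parent z η hη := by
  rw [subtreeGain_eq, costDecrease]
  exact sub_le_sub_left (Finset.inf'_le (fun c => ∑ ℓ ∈ subLeaves η, val (ℓ ⊔ c) ^ z) ho) _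

theorem costDecrease_eq_subtreeGain {η c : V} (hc : c ∈ subLeaves η)
    (hopt : ∀ c' ∈ subLeaves η,
      ∑ ℓ ∈ subLeaves η, val (ℓ ⊔ c) ^ z ≤ ∑ ℓ ∈ subLeaves η, val (ℓ ⊔ c') ^ z)
    (hη : (subLeaves η).Nonempty) :
    costDecrease val parent z η hη = subtreeGain val parent z η c := by
  rw [subtreeGain_eq, costDecrease, le_antisymm (Finset.inf'_le _ hc) (Finset.le_inf' _ _ hopt)]

variable [OrderTop V] (htree : ∀ v a b : V, v ≤ a → v ≤ b → a ≤ b ∨ b ≤ a)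
  (hpar : ∀ v : V, v ≠ ⊤ → v ⋖ parent v) (hval0 : ∀ v, 0 ≤ val v) (hmono : Monotone val)
include htree hpar hval0 hmono

theorem clusterCost_insert_le_of_closest {D : Finset V} {η c o : V}
    (hroot : η = ⊤ ∨ Marked D (parent η)) (hc : c ≤ η) (ho : o ≤ η)
    (hD : ∀ x ∈ D, x ≤ η → c ⊔ o ≤ c ⊔ x)
    (hopt : ∑ ℓ ∈ subLeaves η, val (ℓ ⊔ c) ^ z ≤ ∑ ℓ ∈ subLeaves η, val (ℓ ⊔ o) ^ z) :
    clusterCost val z (insert c D) ≤ clusterCost val z (insert o D) := by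
  have hclosest : ∀ x ∈ D, c ⊔ o ≤ c ⊔ x := fun x hx =>
    if hxη : x ≤ η then hD x hx hxη else (sup_le hc ho).trans (le_sup_of_not_le htree hc hxη)
  have hleaf : ∀ ℓ, centerDist val (insert c D) ℓ ^ z - centerDist val (insert o D) ℓ ^ z ≤
      if ℓ ≤ η then val (ℓ ⊔ c) ^ z - val (ℓ ⊔ o) ^ z else 0 := by
    intro ℓ
    rw [centerDist_insert, centerDist_insert]
    split_ifs with hℓ
    · refine pow_min_sub_pow_min_le z (hval0 _) (centerDist_nonneg hval0 _ _) ?_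
      exact (sup_le_sup_or_forall htree hclosest ℓ).imp (fun h => hmono h)
        fun h => le_centerDist (hmono le_top) fun x hx => hmono (h x hx)
    · have hη : η ≠ ⊤ := by rintro rfl; exact hℓ le_top
      have hp := hroot.resolve_left hη
      have hout : ∀ {x}, x ≤ η → centerDist val D ℓ ≤ val (ℓ ⊔ x) := fun hx =>
        centerDist_le_sup hmono hp
          ((parent_le_sup_of_not_le htree hpar hη hx hℓ).trans_eq (sup_comm _ _))
      rw [min_eq_right (hout hc), min_eq_right (hout ho), sub_self]
  have hsum := Finset.sum_le_sum fun ℓ (_ : ℓ ∈ leavesF V) => hleaf ℓ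
  rw [Finset.sum_sub_distrib, ← Finset.sum_filter, Finset.sum_sub_distrib] at hsum
  change _ ≤ ∑ ℓ ∈ subLeaves η, _ - ∑ ℓ ∈ subLeaves η, _ at hsum
  unfold clusterCost
  linarith

theorem clusterCost_insert_le_of_subtreeGain_le {D : Finset V} {η μ c o : V} (hη : η ≠ ⊤)
    (hμ : μ ≠ ⊤) (hηD : ¬ Marked D η) (hpη : Marked D (parent η)) (hpμ : Marked D (parent μ))
    (hc : c ≤ η) (ho : o ≤ μ) (hoη : ¬ o ≤ η) (hημ : ¬ η ≤ μ)
    (hgain : subtreeGain val parent z μ o ≤ subtreeGain val parent z η c) :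
    clusterCost val z (insert c D) ≤ clusterCost val z (insert o D) := by
  have hdisj : ∀ x, x ≤ η → ¬ x ≤ μ := fun x hxη hxμ =>
    (htree x η μ hxη hxμ).elim hημ fun h => hoη (ho.trans h)
  have hleaf : ∀ ℓ, centerDist val (insert c D) ℓ ^ z - centerDist val (insert o D) ℓ ^ z ≤
      (if ℓ ≤ μ then val (parent μ) ^ z - val (ℓ ⊔ o) ^ z else 0) -
        if ℓ ≤ η then val (parent η) ^ z - val (ℓ ⊔ c) ^ z else 0 := by
    intro ℓ
    rw [centerDist_insert, centerDist_insert]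
    by_cases hℓη : ℓ ≤ η
    · rw [if_neg (hdisj ℓ hℓη), if_pos hℓη,
        centerDist_eq_of_unmarked hmono htree hpar hη hηD hpη hℓη,
        min_eq_left (hmono ((sup_le hℓη hc).trans (hpar η hη).le)),
        min_eq_right (hmono (parent_le_sup_of_not_le htree hpar hη hℓη hoη))]
      linarith
    rw [if_neg hℓη, sub_zero]
    by_cases hℓμ : ℓ ≤ μ
    · rw [if_pos hℓμ, min_eq_right (centerDist_le_sup hmono hpμ
        (parent_le_sup_of_not_le htree hpar hμ hℓμ (hdisj c hc)))]
      exact pow_sub_pow_min_le z (hval0 _) (centerDist_nonneg hval0 _ _)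
        (centerDist_le_of_marked hmono hpμ (hℓμ.trans (hpar μ hμ).le))
        (hmono ((sup_le hℓμ ho).trans (hpar μ hμ).le))
    · rw [if_neg hℓμ,
        min_eq_right (centerDist_le_sup hmono hpη
          ((parent_le_sup_of_not_le htree hpar hη hc hℓη).trans_eq (sup_comm _ _))),
        min_eq_right (centerDist_le_sup hmono hpμ
          ((parent_le_sup_of_not_le htree hpar hμ ho hℓμ).trans_eq (sup_comm _ _))), sub_self]
  have hsum := Finset.sum_le_sum fun ℓ (_ : ℓ ∈ leavesF V) => hleaf ℓ
  rw [Finset.sum_sub_distrib, Finset.sum_sub_distrib, ← Finset.sum_filter,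
    ← Finset.sum_filter] at hsum
  change _ ≤ subtreeGain val parent z μ o - subtreeGain val parent z η c at hsum
  unfold clusterCost
  linarith

theorem exists_exchange {M : Finset V} {η c : V} (hηM : ¬ Marked M η)
    (hroot : η = ⊤ ∨ (Marked M (parent η) ∧ ∀ μ, μ ≠ ⊤ → ¬ Marked M μ →
      ∀ o ∈ subLeaves μ, subtreeGain val parent z μ o ≤ subtreeGain val parent z η c))
    (hc : c ∈ subLeaves η)
    (hopt : ∀ c' ∈ subLeaves η,
      ∑ ℓ ∈ subLeaves η, val (ℓ ⊔ c) ^ z ≤ ∑ ℓ ∈ subLeaves η, val (ℓ ⊔ c') ^ z)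
    {C : Finset V} (hCne : C.Nonempty) (hCleaf : ∀ x ∈ C, IsLeaf x) :
    ∃ o ∈ C, clusterCost val z (insert c (M ∪ C.erase o)) ≤ clusterCost val z (M ∪ C) := by
  have hcη := (mem_subLeaves.1 hc).2
  have hins : ∀ o ∈ C, insert o (M ∪ C.erase o) = M ∪ C := fun o ho => by
    rw [← Finset.union_insert, Finset.insert_erase ho]
  by_cases hCη : Marked C η
  · obtain ⟨o, hoS, hclosest⟩ := exists_forall_sup_le htree c (S := C.filter (· ≤ η))
      (let ⟨x, hx, hxη⟩ := hCη; ⟨x, Finset.mem_filter.2 ⟨hx, hxη⟩⟩)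
    obtain ⟨hoC, hoη⟩ := Finset.mem_filter.1 hoS
    refine ⟨o, hoC, hins o hoC ▸ clusterCost_insert_le_of_closest htree hpar hval0 hmono
      (hroot.imp_right fun h => h.1.subset Finset.subset_union_left) hcη hoη ?_
      (hopt o (mem_subLeaves.2 ⟨hCleaf o hoC, hoη⟩))⟩
    intro x hx hxη
    rcases Finset.mem_union.1 hx with hxM | hxC
    · exact absurd ⟨x, hxM, hxη⟩ hηM
    · exact hclosest x (Finset.mem_filter.2 ⟨Finset.mem_of_mem_erase hxC, hxη⟩)
  obtain ⟨o, hoC⟩ := hCne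
  refine ⟨o, hoC, hins o hoC ▸ ?_⟩
  have hη : η ≠ ⊤ := by rintro rfl; exact hCη ⟨o, hoC, le_top⟩
  obtain ⟨hpη, hgreedy⟩ := hroot.resolve_left hη
  by_cases hoM : Marked M o
  · obtain ⟨x, hxM, hxo⟩ := hoM
    obtain rfl := hCleaf o hoC x hxo
    exact clusterCost_anti hval0 z <| Finset.insert_subset
      (Finset.mem_insert_of_mem (Finset.mem_union_left _ hxM)) (Finset.subset_insert _ _)
  obtain ⟨μ, hoμ, hμ, hμM, hpμ⟩ := exists_unmarked_ancestor hpar (hpη.mono le_top) hoM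
  have hημ : ¬ η ≤ μ := fun h => h.lt_or_eq.elim
    (fun hlt => hμM (hpη.mono (parent_le_of_lt htree hpar hη hlt)))
    (fun heq => hCη ⟨o, hoC, heq ▸ hoμ⟩)
  have hηD : ¬ Marked (M ∪ C.erase o) η := fun ⟨x, hx, hxη⟩ =>
    (Finset.mem_union.1 hx).elim (fun hxM => hηM ⟨x, hxM, hxη⟩)
      (fun hxC => hCη ⟨x, Finset.mem_of_mem_erase hxC, hxη⟩)
  exact clusterCost_insert_le_of_subtreeGain_le htree hpar hval0 hmono hη hμ hηD
    (hpη.subset Finset.subset_union_left) (hpμ.subset Finset.subset_union_left) hcη hoμ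
    (fun h => hCη ⟨o, hoC, h⟩) hημ (hgreedy μ hμ hμM o (mem_subLeaves.2 ⟨hCleaf o hoC, hoμ⟩))

end Greedy

theorem stmt19_general [Fintype V] [SemilatticeSup V] [OrderTop V]
    (htree : ∀ v a b : V, v ≤ a → v ≤ b → a ≤ b ∨ b ≤ a)
    (val : V → ℝ) (hval0 : ∀ v, 0 ≤ val v)
    (hmono : ∀ a b : V, a ≤ b → val a ≤ val b)
    (parent : V → V) (hpar : ∀ v : V, v ≠ ⊤ → v ⋖ parent v)
    (z : ℕ)
    (hbe : ∀ η : V, (subLeaves η).Nonempty)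
    (k : ℕ)
    (Lg : List V) (hlen : Lg.length = k)
    (hgreedy : ∀ (i : ℕ) (hi : i < Lg.length),
      ∃ η : V,
        -- η is unmarked by the previously placed centers
        (¬ ∃ c ∈ Lg.take i, c ≤ η) ∧
        -- η is the root, or its parent is marked and it maximizes the cost-decrease
        -- among unmarked (non-root) nodes
        (η = ⊤ ∨ ((∃ c ∈ Lg.take i, c ≤ parent η) ∧
          ∀ μ : V, μ ≠ ⊤ → (¬ ∃ c ∈ Lg.take i, c ≤ μ) →
            ((subLeaves μ).card : ℝ) * val (parent μ) ^ z -
                (subLeaves μ).inf' (hbe μ) (fun c => ∑ ℓ ∈ subLeaves μ, val (ℓ ⊔ c) ^ z) ≤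
              ((subLeaves η).card : ℝ) * val (parent η) ^ z -
                (subLeaves η).inf' (hbe η) (fun c => ∑ ℓ ∈ subLeaves η, val (ℓ ⊔ c) ^ z))) ∧
        -- the i-th center is an optimal (1,z)-center of the subtree rooted at η
        Lg.get ⟨i, hi⟩ ∈ subLeaves η ∧
        (∀ c' ∈ subLeaves η,
          ∑ ℓ ∈ subLeaves η, val (ℓ ⊔ Lg.get ⟨i, hi⟩) ^ z ≤
            ∑ ℓ ∈ subLeaves η, val (ℓ ⊔ c') ^ z))
    (hgne : Lg.toFinset.Nonempty) :
    ∀ (C : Finset V) (hC : C.Nonempty), (∀ c ∈ C, IsLeaf c) → C.card = k →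
      ∑ ℓ ∈ leavesF V, (Lg.toFinset.inf' hgne (fun c => val (ℓ ⊔ c))) ^ z ≤
        ∑ ℓ ∈ leavesF V, (C.inf' hC (fun c => val (ℓ ⊔ c))) ^ z := by
  intro C hC hCleaf hCcard
  have hexchange : ∀ (i : ℕ) (hi : i < Lg.length) (C' : Finset V), C'.Nonempty →
      (∀ c ∈ C', IsLeaf c) → ∃ o ∈ C',
        clusterCost val z (insert Lg[i] ((Lg.take i).toFinset ∪ C'.erase o)) ≤
          clusterCost val z ((Lg.take i).toFinset ∪ C') := by
    intro i hi C' hC'ne hC'leaf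
    obtain ⟨η, hη, hroot, hc, hopt⟩ := hgreedy i hi
    simp only [← marked_toFinset, List.get_eq_getElem] at hη hroot hc hopt
    refine exists_exchange htree hpar hval0 hmono hη (hroot.imp_right fun ⟨hp, hmax⟩ =>
      ⟨hp, fun μ hμ hμM o ho => ?_⟩) hc hopt hC'ne hC'leaf
    calc subtreeGain val parent z μ o ≤ costDecrease val parent z μ (hbe μ) :=
          subtreeGain_le_costDecrease ho (hbe μ)
      _ ≤ costDecrease val parent z η (hbe η) := hmax μ hμ hμM
      _ = subtreeGain val parent z η Lg[i] := costDecrease_eq_subtreeGain hc hopt (hbe η)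
  have key := le_of_exchange (clusterCost val z) IsLeaf Lg hexchange C hCleaf
    (hCcard.trans hlen.symm)
  simpa only [clusterCost, centerDist_eq_inf' hmono hgne, centerDist_eq_inf' hmono hC] using key

/-- Greedy selection of centers maximizing the cost-decrease yields an optimal
(k,z)-clustering on an LCA-tree: if the list `Lg` of `k` leaf centers is built by
iteratively placing the optimal (1,z)-center of the unmarked subtree of maximum
cost-decrease, then its (k,z)-clustering cost is at most that of any set of `k`
leaves. -/
theorem stmt19 [Fintype V] [SemilatticeSup V] [OrderTop V]
    (htree : ∀ v a b : V, v ≤ a → v ≤ b → a ≤ b ∨ b ≤ a)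
    (val : V → ℝ) (hval0 : ∀ v, 0 ≤ val v)
    (hmono : ∀ a b : V, a ≤ b → val a ≤ val b)
    (parent : V → V) (hpar : ∀ v : V, v ≠ ⊤ → v ⋖ parent v)
    (z : ℕ) (hz : 1 ≤ z)
    (hbe : ∀ η : V, (subLeaves η).Nonempty)
    (k : ℕ) (hk : 0 < k)
    (Lg : List V) (hlen : Lg.length = k) (hleaf : ∀ c ∈ Lg, IsLeaf c)
    (hgreedy : ∀ (i : ℕ) (hi : i < Lg.length),
      ∃ η : V,
        -- η is unmarked by the previously placed centers
        (¬ ∃ c ∈ Lg.take i, c ≤ η) ∧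
        -- η is the root, or its parent is marked and it maximizes the cost-decrease
        -- among unmarked (non-root) nodes
        (η = ⊤ ∨ ((∃ c ∈ Lg.take i, c ≤ parent η) ∧
          ∀ μ : V, μ ≠ ⊤ → (¬ ∃ c ∈ Lg.take i, c ≤ μ) →
            ((subLeaves μ).card : ℝ) * val (parent μ) ^ z -
                (subLeaves μ).inf' (hbe μ) (fun c => ∑ ℓ ∈ subLeaves μ, val (ℓ ⊔ c) ^ z) ≤
              ((subLeaves η).card : ℝ) * val (parent η) ^ z -
                (subLeaves η).inf' (hbe η) (fun c => ∑ ℓ ∈ subLeaves η, val (ℓ ⊔ c) ^ z))) ∧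
        -- the i-th center is an optimal (1,z)-center of the subtree rooted at η
        Lg.get ⟨i, hi⟩ ∈ subLeaves η ∧
        (∀ c' ∈ subLeaves η,
          ∑ ℓ ∈ subLeaves η, val (ℓ ⊔ Lg.get ⟨i, hi⟩) ^ z ≤
            ∑ ℓ ∈ subLeaves η, val (ℓ ⊔ c') ^ z))
    (hgne : Lg.toFinset.Nonempty) :
    ∀ (C : Finset V) (hC : C.Nonempty), (∀ c ∈ C, IsLeaf c) → C.card = k →
      ∑ ℓ ∈ leavesF V, (Lg.toFinset.inf' hgne (fun c => val (ℓ ⊔ c))) ^ z ≤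
        ∑ ℓ ∈ leavesF V, (C.inf' hC (fun c => val (ℓ ⊔ c))) ^ z :=
  stmt19_general htree val hval0 hmono parent hpar z hbe k Lg hlen hgreedy hgne
end
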